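/- Let f ∈ L_p(G) for some 1 ≤ p < ∞ and n ∈ ℕ. Then ∫_G ‖f(·+u) − f(·)‖_p K_{2^n}(u) dμ(u) ≤ ω_p(f, 1/2^n) + Σ_{s=0}^{n−1} (2^s/2^n) ω_p(f, 1/2^s). -/

import Mathlib

open MeasureTheory
open scoped ENNReal

noncomputable section

/-- The dyadic group: countable product of `ZMod 2`. -/
abbrev G : Type := ℕ → ZMod 2

instance : TopologicalSpace (ZMod 2) := ⊥
instance : DiscreteTopology (ZMod 2) := ⟨rfl⟩
instance : IsTopologicalAddGroup (ZMod 2) :=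
  { continuous_add := continuous_of_discreteTopology
    continuous_neg := continuous_of_discreteTopology }

instance : MeasurableSpace G := borel G
instance : BorelSpace G := ⟨rfl⟩

/-- The normalized Haar measure on the dyadic group. -/
def haarG : Measure G :=
  Measure.addHaarMeasure ⟨⟨Set.univ, isCompact_univ⟩, by simp⟩

/-- Rademacher functions. -/
def rade (k : ℕ) (x : G) : ℝ := (-1 : ℝ) ^ (x k).val

/-- Walsh–Paley functions. -/
def walsh (n : ℕ) (x : G) : ℝ :=
  ∏ k ∈ Finset.range (n + 1), if n.testBit k then rade k x else 1

/-- Dirichlet kernels. -/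
def Dker (n : ℕ) (x : G) : ℝ := ∑ k ∈ Finset.range n, walsh k x

/-- Fejér kernels. -/
def Fker (n : ℕ) (x : G) : ℝ := (1 / n : ℝ) * ∑ k ∈ Finset.Icc 1 n, Dker k x

/-- Walsh–Fourier coefficients. -/
def fourierCoef (f : G → ℝ) (j : ℕ) : ℝ := ∫ x, f x * walsh j x ∂haarG

/-- Partial sums of the Walsh–Fourier series. -/
def partialSum (f : G → ℝ) (k : ℕ) (x : G) : ℝ :=
  ∑ j ∈ Finset.range k, fourierCoef f j * walsh j x

/-- Fejér means. -/
def fejerMean (n : ℕ) (f : G → ℝ) (x : G) : ℝ :=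
  (1 / n : ℝ) * ∑ k ∈ Finset.Icc 1 n, partialSum f k x

/-- Matrix transform means. -/
def sigmaT (t : ℕ → ℕ → ℝ) (n : ℕ) (f : G → ℝ) (x : G) : ℝ :=
  ∑ k ∈ Finset.Icc 1 n, t k n * partialSum f k x

/-- Matrix transform kernels. -/
def KT (t : ℕ → ℕ → ℝ) (n : ℕ) (x : G) : ℝ :=
  ∑ k ∈ Finset.Icc 1 n, t k n * Dker k x

/-- `Δ t_{k,n} = t_{k,n} - t_{k+1,n}` with convention `t_{n+1,n} = 0`. -/
def deltaT (t : ℕ → ℕ → ℝ) (k n : ℕ) : ℝ :=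
  t k n - (if k + 1 ≤ n then t (k + 1) n else 0)

/-- `|x| = ∑ x_i 2^{-(i+1)}` for `x ∈ G`. -/
def normG (x : G) : ℝ := ∑' i, ((x i).val : ℝ) / 2 ^ (i + 1)

/-- The `L_p` modulus of continuity. -/
def omegaP (p : ℝ≥0∞) (f : G → ℝ) (δ : ℝ) : ℝ≥0∞ :=
  ⨆ (t : G) (_ : normG t < δ), eLpNorm (fun x => f (x + t) - f x) p haarG

/-- Dyadic intervals `I_n` (around `0`). -/
def Iset (n : ℕ) : Set G := {y | ∀ i < n, y i = 0}

/-- `e_t ∈ G`: the `t`-th coordinate is `1`, the rest are `0`. -/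
def eG (t : ℕ) : G := fun i => if i = t then 1 else 0

/-- The order `|n|` of a positive integer: `2^{|n|} ≤ n < 2^{|n|+1}`. -/
def ord (n : ℕ) : ℕ := Nat.log 2 n

/-!
The Fejér kernel `K_{2^n}` is a step function. From `w_{2^n + i} = r_n w_i` one gets
`D_{2^n} = 2^n 1_{I_n}` and `K_{2^(n+1)} = 1[x_n = 0] K_{2^n} + D_{2^n} / 2`, hence
`K_{2^n} = (2^n + 1)/2` on `I_n`, `K_{2^n} = 2^(s-1)` on the coset `e_s + I_n` (`s < n`), and
`K_{2^n} = 0` elsewhere. Each of these cosets has Haar measure `2^(-n)` (`I_n` has index `2^n`)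
and lies in `I_s`, all of whose points but one have `|u| < 2^(-s)`; there the integrand is at most
`2^s ω_p(f, 2^(-s))`. Integrating this step-function bound gives the inequality.
-/
-- `Iset n` is definitionally `Cyl 0 n`, so lemmas about `Cyl` apply to it directly.
def Cyl (v : G) (n : ℕ) : Set G := {u | ∀ i < n, u i = v i}

lemma mem_Cyl_succ {v u : G} {n : ℕ} : u ∈ Cyl v (n + 1) ↔ u ∈ Cyl v n ∧ u n = v n := by
  simp only [Cyl, Set.mem_ofPred_eq, Nat.lt_succ_iff_lt_or_eq, or_imp, forall_and,
    forall_eq]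

lemma mem_Iset_or_exists_first_ne_zero (u : G) (n : ℕ) :
    u ∈ Iset n ∨ ∃ s < n, u ∈ Iset s ∧ u s ≠ 0 := by
  induction n with
  | zero => exact Or.inl fun i hi => absurd hi (Nat.not_lt_zero i)
  | succ n ih =>
    rcases ih with hu | ⟨s, hsn, hus⟩
    · by_cases hn : u n = 0
      · exact Or.inl (mem_Cyl_succ.2 ⟨hu, hn⟩)
      · exact Or.inr ⟨n, n.lt_succ_self, hu, hn⟩
    · exact Or.inr ⟨s, hsn.trans n.lt_succ_self, hus⟩

lemma ZMod.eq_one_of_ne_zero_two {a : ZMod 2} (h : a ≠ 0) : a = 1 := by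
  revert a; decide

lemma rade_of_eq_zero {k : ℕ} {x : G} (h : x k = 0) : rade k x = 1 := by
  simp [rade, h]

lemma rade_of_ne_zero {k : ℕ} {x : G} (h : x k ≠ 0) : rade k x = -1 := by
  rw [rade, ZMod.eq_one_of_ne_zero_two h]
  exact pow_one _

lemma one_add_rade (k : ℕ) (x : G) : 1 + rade k x = if x k = 0 then 2 else 0 := by
  split_ifs with h
  · rw [rade_of_eq_zero h]; norm_num
  · rw [rade_of_ne_zero h]; norm_num

lemma walsh_eq_prod_range {m N : ℕ} (h : m < 2 ^ N) (x : G) :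
    walsh m x = ∏ k ∈ Finset.range N, if m.testBit k then rade k x else 1 := by
  have trunc : ∀ A B, m < 2 ^ A → A ≤ B →
      (∏ k ∈ Finset.range A, if m.testBit k then rade k x else 1)
        = ∏ k ∈ Finset.range B, if m.testBit k then rade k x else 1 := by
    intro A B hA hAB
    refine Finset.prod_subset (Finset.range_subset_range.2 hAB) fun k _ hk => ?_
    have : m < 2 ^ k := hA.trans_le (Nat.pow_le_pow_right two_pos (by simpa using hk))
    simp [Nat.testBit_lt_two_pow this]
  rcases le_total (m + 1) N with hle | hle
  · exact trunc _ _ (Nat.lt_two_pow_self.trans (Nat.pow_lt_pow_succ one_lt_two)) hle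
  · exact (trunc _ _ h hle).symm

lemma walsh_two_pow_add {n i : ℕ} (h : i < 2 ^ n) (x : G) :
    walsh (2 ^ n + i) x = rade n x * walsh i x := by
  have h' : 2 ^ n + i < 2 ^ (n + 1) := by rw [pow_succ]; omega
  rw [walsh_eq_prod_range h', Finset.prod_range_succ, walsh_eq_prod_range h,
    Nat.testBit_two_pow_add_eq, Nat.testBit_lt_two_pow h, Bool.not_false, if_pos rfl, mul_comm]
  refine congrArg _ (Finset.prod_congr rfl fun k hk => ?_)
  rw [Nat.testBit_two_pow_add_gt (Finset.mem_range.1 hk)]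

lemma Dker_two_pow_add {n j : ℕ} (hj : j ≤ 2 ^ n) (x : G) :
    Dker (2 ^ n + j) x = Dker (2 ^ n) x + rade n x * Dker j x := by
  rw [Dker, Finset.sum_range_add, Dker, Dker, Finset.mul_sum]
  congr 1
  exact Finset.sum_congr rfl fun i hi =>
    walsh_two_pow_add ((Finset.mem_range.1 hi).trans_le hj) x

lemma Dker_two_pow (n : ℕ) (x : G) :
    Dker (2 ^ n) x = (Iset n).indicator (fun _ => 2 ^ n) x := by
  induction n with
  | zero => simp [Iset, Dker, walsh]
  | succ n ih =>
    have hsucc : x ∈ Iset (n + 1) ↔ x ∈ Iset n ∧ x n = 0 := mem_Cyl_succ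
    rw [pow_succ, mul_two, Dker_two_pow_add le_rfl, ← one_add_mul, one_add_rade, ih]
    by_cases hI : x ∈ Iset n <;> by_cases hn : x n = 0 <;>
      simp [hI, hn, hsucc, pow_succ, mul_comm]

lemma Fker_eq_sum_range (N : ℕ) (x : G) :
    Fker N x = (∑ k ∈ Finset.range N, Dker (k + 1) x) / N := by
  rw [Fker, ← Finset.Ico_add_one_right_eq_Icc, Finset.sum_Ico_eq_sum_range,
    Nat.add_sub_cancel, one_div_mul_eq_div]
  simp only [add_comm 1]

lemma Fker_two_pow_succ (n : ℕ) (x : G) :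
    Fker (2 ^ (n + 1)) x = (if x n = 0 then Fker (2 ^ n) x else 0) + Dker (2 ^ n) x / 2 := by
  set S := ∑ k ∈ Finset.range (2 ^ n), Dker (k + 1) x
  have hsum : ∑ k ∈ Finset.range (2 ^ (n + 1)), Dker (k + 1) x
      = (1 + rade n x) * S + 2 ^ n * Dker (2 ^ n) x := by
    rw [pow_succ, mul_two, Finset.sum_range_add]
    have hshift : ∀ k ∈ Finset.range (2 ^ n),
        Dker (2 ^ n + k + 1) x = Dker (2 ^ n) x + rade n x * Dker (k + 1) x := fun k hk =>
      Dker_two_pow_add (Finset.mem_range.1 hk) x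
    rw [Finset.sum_congr rfl hshift, Finset.sum_add_distrib, ← Finset.mul_sum, Finset.sum_const,
      Finset.card_range, nsmul_eq_mul]
    push_cast
    ring
  rw [Fker_eq_sum_range, Fker_eq_sum_range, hsum, one_add_rade]
  push_cast
  split_ifs <;> field_simp <;> ring

lemma Fker_two_pow_of_mem_Iset {n : ℕ} {x : G} (hx : x ∈ Iset n) :
    Fker (2 ^ n) x = (2 ^ n + 1) / 2 := by
  induction n with
  | zero => norm_num [Fker, Dker, walsh]
  | succ n ih =>
    obtain ⟨hxn, hx0⟩ : x ∈ Iset n ∧ x n = 0 := mem_Cyl_succ.1 hx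
    rw [Fker_two_pow_succ, if_pos hx0, ih hxn, Dker_two_pow, Set.indicator_of_mem hxn]
    ring

lemma Fker_two_pow_of_lt {s n : ℕ} (hsn : s < n) {x : G} (hx : x ∈ Iset s) (hxs : x s ≠ 0) :
    Fker (2 ^ n) x = (Cyl (eG s) n).indicator (fun _ => 2 ^ s / 2) x := by
  induction n, hsn using Nat.le_induction with
  | base =>
    have hC : x ∈ Cyl (eG s) (s + 1) :=
      mem_Cyl_succ.2 ⟨fun i hi => by simp [hx i hi, eG, hi.ne], by
        simp [eG, ZMod.eq_one_of_ne_zero_two hxs]⟩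
    rw [Fker_two_pow_succ, if_neg hxs, Dker_two_pow, Set.indicator_of_mem hx,
      Set.indicator_of_mem hC, zero_add]
  | succ n hsn ih =>
    have hxn : x ∉ Iset n := fun h => hxs (h s hsn)
    have hen : eG s n = 0 := if_neg (Nat.ne_of_lt hsn).symm
    rw [Fker_two_pow_succ, ih, Dker_two_pow, Set.indicator_of_notMem hxn, zero_div, add_zero]
    classical
    simp only [Set.indicator_apply, mem_Cyl_succ, hen]
    by_cases hx0 : x n = 0 <;> simp [hx0]

lemma measurableSet_Cyl (v : G) (n : ℕ) : MeasurableSet (Cyl v n) := by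
  have : Cyl v n = ⋂ i ∈ Set.Iio n, (fun u : G => u i) ⁻¹' {v i} := by
    ext u; simp [Cyl]
  rw [this]
  exact MeasurableSet.biInter (Set.to_countable _) fun i _ =>
    (continuous_apply i).measurable (measurableSet_singleton _)

instance : haarG.IsAddHaarMeasure := by
  unfold haarG; infer_instance

instance : IsProbabilityMeasure haarG := ⟨Measure.addHaarMeasure_self⟩

def truncHom (n : ℕ) : G →+ (Fin n → ZMod 2) :=
  AddMonoidHom.pi fun i => Pi.evalAddMonoidHom _ i.val

lemma truncHom_surjective (n : ℕ) : Function.Surjective (truncHom n) := fun y =>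
  ⟨fun i => if h : i < n then y ⟨i, h⟩ else 0, funext fun i => by simp [truncHom]⟩

lemma haarG_Iset (n : ℕ) : haarG (Iset n) = (2 ^ n)⁻¹ := by
  have hker : ((truncHom n).ker : Set G) = Iset n := by
    ext u; simp [truncHom, Iset, funext_iff, Fin.forall_iff]
  have hindex : (truncHom n).ker.index = 2 ^ n := by
    rw [AddSubgroup.index_ker, (truncHom n).range_eq_top_of_surjective (truncHom_surjective n)]
    simp
  have : (truncHom n).ker.FiniteIndex := ⟨by rw [hindex]; positivity⟩
  have hmul := AddSubgroup.index_mul_measure (truncHom n).ker (hker ▸ measurableSet_Cyl 0 n) haarG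
  rw [hker, hindex, measure_univ, Nat.cast_pow, Nat.cast_ofNat, mul_comm] at hmul
  exact ENNReal.eq_inv_of_mul_eq_one_left hmul

lemma haarG_Cyl (v : G) (n : ℕ) : haarG (Cyl v n) = (2 ^ n)⁻¹ := by
  have : Cyl v n = (fun u => v + u) ⁻¹' Iset n := by
    ext u
    simp only [Cyl, Iset, Set.mem_preimage, Set.mem_ofPred_eq, Pi.add_apply,
      add_eq_zero_iff_neg_eq', ZMod.neg_eq_self_mod_two, eq_comm]
  rw [this, measure_preimage_add, haarG_Iset]

-- Makes `haarG` atomless, through `IsAddHaarMeasure.nullSingletonClass`.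
instance : (nhdsWithin (0 : G) {0}ᶜ).NeBot := by
  have hlim : Filter.Tendsto eG Filter.atTop (nhds 0) := by
    refine tendsto_pi_nhds.2 fun i => tendsto_nhds_of_eventually_eq ?_
    filter_upwards [Filter.eventually_gt_atTop i] with t ht
    exact if_neg (Nat.ne_of_lt ht)
  refine (tendsto_nhdsWithin_iff.2 ⟨hlim, Filter.Eventually.of_forall fun t => ?_⟩).neBot
  exact Set.mem_compl_singleton_iff.2 fun h => by simpa [eG] using congrFun h t

lemma summable_normG (u : G) : Summable fun i => ((u i).val : ℝ) / 2 ^ (i + 1) := by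
  refine Summable.of_nonneg_of_le (fun i => by positivity) (fun i => ?_)
    ((summable_geometric_two).mul_left (1 / 2))
  have : ((u i).val : ℝ) ≤ 1 := by exact_mod_cast Nat.le_of_lt_succ (ZMod.val_lt (u i))
  calc ((u i).val : ℝ) / 2 ^ (i + 1) ≤ 1 / 2 ^ (i + 1) := by gcongr
    _ = 1 / 2 * (1 / 2) ^ i := by rw [pow_succ, one_div_pow]; field_simp

lemma normG_lt_of_val_le_of_val_lt {u v : G} (hle : ∀ i, (u i).val ≤ (v i).val) {j : ℕ}
    (hlt : (u j).val < (v j).val) : normG u < normG v :=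
  Summable.tsum_lt_tsum_of_nonneg (fun i => by positivity)
    (fun i => by gcongr; exact_mod_cast hle i) (by gcongr) (summable_normG v)

/-- The only point of `Iset s` outside the open ball `normG u < 1 / 2 ^ s`. -/
def zOnes (s : ℕ) : G := fun i => if i < s then 0 else 1

lemma normG_zOnes (s : ℕ) : normG (zOnes s) = 1 / 2 ^ s := by
  rw [normG, ← (summable_normG (zOnes s)).sum_add_tsum_nat_add s,
    Finset.sum_eq_zero fun i hi => by simp [zOnes, Finset.mem_range.1 hi], zero_add]
  have hterm : ∀ i, ((zOnes s (i + s)).val : ℝ) / 2 ^ (i + s + 1) = 1 / 2 ^ s / 2 / 2 ^ i :=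
    fun i => by simp [zOnes, -ZMod.natCast_val, ZMod.val_one]; ring
  rw [tsum_congr hterm, tsum_geometric_two']

lemma normG_lt_of_mem_Iset {s : ℕ} {u : G} (hu : u ∈ Iset s) (hne : u ≠ zOnes s) :
    normG u < 1 / 2 ^ s := by
  obtain ⟨j, hj⟩ := Function.ne_iff.1 hne
  have hjs : ¬ j < s := fun h => hj (by simp [hu j h, zOnes, h])
  rw [← normG_zOnes s]
  refine normG_lt_of_val_le_of_val_lt (j := j) (fun i => ?_) ?_
  · by_cases hi : i < s
    · simp [hu i hi]
    · rw [zOnes, if_neg hi]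
      exact Nat.le_of_lt_succ (ZMod.val_lt _)
  · rw [zOnes, if_neg hjs] at hj ⊢
    have huj : u j = 0 := by_contra fun h => hj (ZMod.eq_one_of_ne_zero_two h)
    rw [huj]
    exact Nat.one_pos

lemma ae_ne_zOnes : ∀ᵐ u ∂haarG, ∀ s, u ≠ zOnes s :=
  (measure_eq_zero_iff_ae_notMem.1 ((Set.countable_range zOnes).measure_zero haarG)).mono
    fun _ hu s h => hu ⟨s, h.symm⟩

lemma eLpNorm_translate_le_omegaP {p : ℝ≥0∞} {f : G → ℝ} {u : G} {δ : ℝ} (h : normG u < δ) :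
    eLpNorm (fun x => f (x + u) - f x) p haarG ≤ omegaP p f δ :=
  le_iSup₂ (f := fun t (_ : normG t < δ) => eLpNorm (fun x => f (x + t) - f x) p haarG) u h

lemma mul_ofReal_Fker_two_pow_le {E : ℝ≥0∞} {ω : ℕ → ℝ≥0∞} {n : ℕ} {u : G}
    (hE : ∀ s ≤ n, u ∈ Iset s → E ≤ ω s) :
    E * ENNReal.ofReal (Fker (2 ^ n) u) ≤
      (Iset n).indicator (fun _ => 2 ^ n * ω n) u
        + ∑ s ∈ Finset.range n, (Cyl (eG s) n).indicator (fun _ => 2 ^ s * ω s) u := by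
  rcases mem_Iset_or_exists_first_ne_zero u n with hu | ⟨s, hsn, hus, hs0⟩
  · have hK : ENNReal.ofReal ((2 ^ n + 1) / 2) ≤ 2 ^ n := by
      refine ENNReal.ofReal_le_of_le_toReal ?_
      have : (1 : ℝ) ≤ 2 ^ n := one_le_pow₀ one_le_two
      simp only [ENNReal.toReal_pow, ENNReal.toReal_ofNat]
      linarith
    rw [Fker_two_pow_of_mem_Iset hu, Set.indicator_of_mem hu, mul_comm (2 ^ n)]
    exact le_add_right (mul_le_mul' (hE n le_rfl hu) hK)
  · rw [Fker_two_pow_of_lt hsn hus hs0]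
    by_cases hC : u ∈ Cyl (eG s) n
    · have hK : ENNReal.ofReal (2 ^ s / 2) ≤ 2 ^ s := by
        refine ENNReal.ofReal_le_of_le_toReal ?_
        simp only [ENNReal.toReal_pow, ENNReal.toReal_ofNat]
        linarith [pow_pos (two_pos : (0 : ℝ) < 2) s]
      refine le_add_left (le_trans ?_ (Finset.single_le_sum (fun _ _ => zero_le)
        (Finset.mem_range.2 hsn)))
      rw [Set.indicator_of_mem hC, Set.indicator_of_mem hC, mul_comm (2 ^ s)]
      exact mul_le_mul' (hE s hsn.le hus) hK
    · rw [Set.indicator_of_notMem hC, ENNReal.ofReal_zero, mul_zero]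
      exact zero_le

theorem statement11_general (p : ℝ≥0∞) (f : G → ℝ) (n : ℕ) :
    ∫⁻ u, eLpNorm (fun x => f (x + u) - f x) p haarG
        * ENNReal.ofReal (Fker (2 ^ n) u) ∂haarG ≤
      omegaP p f (1 / 2 ^ n)
        + ∑ s ∈ Finset.range n, ((2 : ℝ≥0∞) ^ s / 2 ^ n) * omegaP p f (1 / 2 ^ s) := by
  set ω : ℕ → ℝ≥0∞ := fun s => omegaP p f (1 / 2 ^ s)
  have hE : ∀ᵐ u ∂haarG, ∀ s ≤ n, u ∈ Iset s →
      eLpNorm (fun x => f (x + u) - f x) p haarG ≤ ω s := by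
    filter_upwards [ae_ne_zOnes] with u hu s _ hus
    exact eLpNorm_translate_le_omegaP (normG_lt_of_mem_Iset hus (hu s))
  calc _ ≤ ∫⁻ u, ((Iset n).indicator (fun _ => 2 ^ n * ω n) u
          + ∑ s ∈ Finset.range n, (Cyl (eG s) n).indicator (fun _ => 2 ^ s * ω s) u) ∂haarG :=
        lintegral_mono_ae (hE.mono fun u hu => mul_ofReal_Fker_two_pow_le hu)
    _ = 2 ^ n * ω n * (2 ^ n)⁻¹ + ∑ s ∈ Finset.range n, 2 ^ s * ω s * (2 ^ n)⁻¹ := by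
        have hI : MeasurableSet (Iset n) := measurableSet_Cyl 0 n
        rw [lintegral_add_left (measurable_const.indicator hI),
          lintegral_finsetSum _ fun s _ => measurable_const.indicator (measurableSet_Cyl _ _),
          lintegral_indicator_const hI, haarG_Iset]
        simp_rw [lintegral_indicator_const (measurableSet_Cyl _ _), haarG_Cyl]
    _ = _ := by
        congr 1
        · rw [mul_comm, ← mul_assoc, ENNReal.inv_mul_cancel (by positivity) (by simp), one_mul]
        · refine Finset.sum_congr rfl fun s _ => ?_
          rw [ENNReal.div_eq_inv_mul]
          ring

theorem statement11 (p : ℝ≥0∞) (hp1 : 1 ≤ p) (hp2 : p ≠ ∞) (f : G → ℝ)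
    (hf : MemLp f p haarG) (n : ℕ) :
    ∫⁻ u, eLpNorm (fun x => f (x + u) - f x) p haarG
        * ENNReal.ofReal (Fker (2 ^ n) u) ∂haarG ≤
      omegaP p f (1 / 2 ^ n)
        + ∑ s ∈ Finset.range n, ((2 : ℝ≥0∞) ^ s / 2 ^ n) * omegaP p f (1 / 2 ^ s) :=
  statement11_general p f n
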